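/- For any hypermap M, the inequality 2·c ≥ χ holds, where c is the number of connected components and χ = v + e + f - d is the Euler characteristic. -/

import Mathlib

open Equiv

/-- The setoid on darts given by the cycle (orbit) relation of a permutation. -/
def cycleSetoid {D : Type*} (f : Perm D) : Setoid D :=
  ⟨f.SameCycle, ⟨fun x => Perm.SameCycle.refl f x, Perm.SameCycle.symm, Perm.SameCycle.trans⟩⟩

/-- Number of orbits (cycles) of a permutation. -/
noncomputable def numCycles {D : Type*} (f : Perm D) : ℕ :=
  Nat.card (Quotient (cycleSetoid f))

/-- The face permutation φ = α₁⁻¹ ∘ α₀⁻¹. -/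
def facePerm {D : Type*} (a0 a1 : Perm D) : Perm D := (a0⁻¹).trans (a1⁻¹)

/-- Number of connected components: orbits of the subgroup generated by α₀ and α₁. -/
noncomputable def numComponents {D : Type*} (a0 a1 : Perm D) : ℕ :=
  Nat.card (MulAction.orbitRel.Quotient (Subgroup.closure {a0, a1}) D)

/-- Euler characteristic χ = v + e + f - d. -/
noncomputable def eulerChar (D : Type*) [Fintype D] (a0 a1 : Perm D) : ℤ :=
  (numCycles a1 : ℤ) + numCycles a0 + numCycles (facePerm a0 a1) - Fintype.card D


/-- Genus g = c - χ/2 (integer division). -/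
noncomputable def genusZ (D : Type*) [Fintype D] (a0 a1 : Perm D) : ℤ :=
  (numComponents a0 a1 : ℤ) - eulerChar D a0 a1 / 2

/-- Planarity: genus zero. -/
def PlanarH (D : Type*) [Fintype D] (a0 a1 : Perm D) : Prop := genusZ D a0 a1 = 0

/-!
Induction on `d - v`. If `x ≠ y` lie in one cycle of `α₁`, replacing `α₁` by `α₁ * swap x y`
splits that cycle, so `v` grows by one, and replaces `φ` by `swap x y * φ`. Either this splits a
face, so `f` grows by one while `c` grows by at most one, or it merges two faces into one, so `f`
drops by at most one while `x` and `y` stay in one component and `c` does not grow. In both cases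
`χ - 2c` does not decrease. When `α₁ = 1` the bound is `v ≤ d` together with `e, f ≤ c`, as every
orbit of `⟨α₀⟩` is then a component.
-/

namespace Setoid

variable {α : Type*}

theorem card_quotient_le_of_le [Finite α] {r s : Setoid α} (h : r ≤ s) :
    Nat.card (Quotient s) ≤ Nat.card (Quotient r) :=
  Nat.card_le_card_of_surjective (map_of_le h) (Quotient.ind fun a => ⟨Quotient.mk r a, rfl⟩)

theorem card_quotient_lt_of_le [Finite α] {r s : Setoid α} (h : r ≤ s) {x y : α} (hs : s x y)
    (hr : ¬ r x y) : Nat.card (Quotient s) < Nat.card (Quotient r) := by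
  have := Fintype.ofFinite (Quotient r)
  have := Fintype.ofFinite (Quotient s)
  rw [Nat.card_eq_fintype_card, Nat.card_eq_fintype_card]
  exact Fintype.card_lt_of_surjective_not_injective (map_of_le h)
    (Quotient.ind fun a => ⟨Quotient.mk r a, rfl⟩)
    fun hinj => hr (Quotient.exact (hinj (Quotient.sound hs)))

def mergeClasses (r : Setoid α) (x y : α) : Setoid α where
  r a b := r a b ∨ (r a x ∨ r a y) ∧ (r b x ∨ r b y)
  iseqv := by
    refine ⟨fun a => .inl (r.refl a), fun h => h.imp r.symm And.symm, ?_⟩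
    rintro a b c (hab | ⟨ha, hb⟩) (hbc | ⟨hb', hc⟩)
    · exact .inl (r.trans hab hbc)
    · exact .inr ⟨hb'.imp (r.trans hab) (r.trans hab), hc⟩
    · exact .inr ⟨ha, hb.imp (r.trans (r.symm hbc)) (r.trans (r.symm hbc))⟩
    · exact .inr ⟨ha, hc⟩

theorem le_mergeClasses (r : Setoid α) (x y : α) : r ≤ r.mergeClasses x y :=
  fun _ _ => .inl

theorem mergeClasses_rel (r : Setoid α) (x y : α) : r.mergeClasses x y x y :=
  .inr ⟨.inl (r.refl x), .inr (r.refl y)⟩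

theorem card_quotient_le_card_quotient_mergeClasses_add_one [Finite α] (r : Setoid α) (x y : α) :
    Nat.card (Quotient r) ≤ Nat.card (Quotient (r.mergeClasses x y)) + 1 := by
  classical
  rw [← Finite.card_option]
  refine Nat.card_le_card_of_injective (Quotient.lift
    (fun a => if r a x then none else some (Quotient.mk (r.mergeClasses x y) a)) ?_) ?_
  · intro a b hab
    have hx : r a x ↔ r b x := ⟨r.trans (r.symm hab), r.trans hab⟩
    simp only [hx]
    split_ifs
    · rfl
    · exact congrArg some (Quotient.sound (.inl hab))
  · refine Quotient.ind₂ fun a b hab => Quotient.sound ?_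
    simp only [Quotient.lift_mk] at hab
    split_ifs at hab with ha hb hb
    · exact r.trans ha (r.symm hb)
    · rcases Quotient.exact (Option.some_inj.1 hab) with h | ⟨ha', hb'⟩
      · exact h
      · exact r.trans (ha'.resolve_left ha) (r.symm (hb'.resolve_left hb))

theorem rel_swap_apply [DecidableEq α] {r : Setoid α} {x y : α} (h : r x y) (z : α) :
    r (swap x y z) z := by
  rw [swap_apply_def]
  split_ifs with hx hy
  · exact hx ▸ r.symm h
  · exact hy ▸ h
  · exact r.refl z

end Setoid

theorem MulAction.orbitRel_closure_le {G α : Type*} [Group G] [MulAction G α] {S : Set G}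
    {r : Setoid α} (h : ∀ g ∈ S, ∀ a, r (g • a) a) : orbitRel (Subgroup.closure S) α ≤ r := by
  have key : ∀ g ∈ Subgroup.closure S, ∀ a, r (g • a) a := by
    intro g hg
    induction hg using Subgroup.closure_induction with
    | mem g hg => exact h g hg
    | one => exact fun a => by rw [one_smul]
    | mul g k _ _ hg hk => exact fun a => by rw [mul_smul]; exact r.trans (hg _) (hk a)
    | inv g _ hg => exact fun a => r.symm (by simpa using hg (g⁻¹ • a))
  rintro a b ⟨⟨g, hg⟩, rfl⟩
  exact key g hg b

namespace Equiv.Perm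

variable {α : Type*} [Finite α]

theorem not_sameCycle_of_pow_apply_eq_self {f : Perm α} {a b : α} {n : ℕ} (hn : 0 < n)
    (hper : (f ^ n) a = a) (hb : ∀ i < n, (f ^ i) a ≠ b) : ¬ f.SameCycle a b := by
  intro h
  obtain ⟨i, rfl⟩ := h.exists_nat_pow_eq
  refine hb (i % n) (Nat.mod_lt i hn) ?_
  conv_rhs => rw [← Nat.mod_add_div i n]
  rw [pow_add, pow_mul, mul_apply, pow_apply_eq_self_of_apply_eq_self hper]

theorem sameCycle_swap_mul_iff [DecidableEq α] {f : Perm α} {x y : α} (hxy : x ≠ y) :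
    (swap x y * f).SameCycle x y ↔ ¬ f.SameCycle x y := by
  -- `n` is the first return time of the `f`-orbit of `x` to `{x, y}`; up to then `swap x y * f`
  -- follows `f`, and at time `n` the swap sends the orbit to the other point.
  have hex : ∃ n, 0 < n ∧ ((f ^ n) x = x ∨ (f ^ n) x = y) :=
    ⟨orderOf f, orderOf_pos f, .inl (by rw [pow_orderOf_eq_one]; rfl)⟩
  set n := Nat.find hex
  obtain ⟨hn, hret⟩ : 0 < n ∧ ((f ^ n) x = x ∨ (f ^ n) x = y) := Nat.find_spec hex
  have hmin : ∀ i, 0 < i → i < n → (f ^ i) x ≠ x ∧ (f ^ i) x ≠ y := fun i hi hin =>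
    not_or.1 fun h => Nat.find_min hex hin ⟨hi, h⟩
  have hsucc : ∀ i, ((swap x y * f) ^ i) x = (f ^ i) x →
      ((swap x y * f) ^ (i + 1)) x = swap x y ((f ^ (i + 1)) x) := fun i h => by
    rw [pow_succ', mul_apply, h, mul_apply, ← mul_apply f, ← pow_succ']
  have hfollow : ∀ i < n, ((swap x y * f) ^ i) x = (f ^ i) x := by
    intro i
    induction i with
    | zero => simp
    | succ i ih =>
      intro hi
      obtain ⟨h1, h2⟩ := hmin (i + 1) i.succ_pos hi
      rw [hsucc i (ih (by omega)), swap_apply_of_ne_of_ne h1 h2]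
  have hlast : ((swap x y * f) ^ n) x = swap x y ((f ^ n) x) := by
    obtain ⟨k, hk⟩ := Nat.exists_eq_add_of_lt hn
    rw [hk, zero_add] at hfollow ⊢
    exact hsucc k (hfollow k k.lt_succ_self)
  have hy : ∀ i < n, (f ^ i) x ≠ y := by
    rintro (_ | i) hi
    · simpa using hxy
    · exact (hmin _ i.succ_pos hi).2
  rcases hret with hret | hret
  · rw [hret, swap_apply_left] at hlast
    exact iff_of_true ⟨n, by simpa using hlast⟩ (not_sameCycle_of_pow_apply_eq_self hn hret hy)
  · rw [hret, swap_apply_right] at hlast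
    refine iff_of_false (not_sameCycle_of_pow_apply_eq_self hn hlast fun i hi => ?_)
      (not_not.2 ⟨n, by simpa using hret⟩)
    rw [hfollow i hi]
    exact hy i hi

end Equiv.Perm

section CycleCounts

variable {α : Type*}

theorem cycleSetoid_le {f : Perm α} {r : Setoid α} (h : ∀ z, r (f z) z) : cycleSetoid f ≤ r := by
  rintro a _ ⟨i, rfl⟩
  refine r.symm (MulAction.orbitRel_closure_le (S := {f}) ?_ ⟨⟨f ^ i, ?_⟩, rfl⟩)
  · rintro g rfl
    exact h
  · rw [← Subgroup.zpowers_eq_closure]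
    exact Subgroup.zpow_mem_zpowers f i

theorem numCycles_le_card [Finite α] (f : Perm α) : numCycles f ≤ Nat.card α :=
  Nat.card_le_card_of_surjective _ Quotient.mk_surjective

theorem numCycles_mul_comm (f g : Perm α) : numCycles (f * g) = numCycles (g * f) :=
  Nat.card_congr <| Quotient.congr g fun a b => by
    change (f * g).SameCycle a b ↔ (g * f).SameCycle (g a) (g b)
    rw [show g * f = g * (f * g) * g⁻¹ by group, Perm.sameCycle_conj]
    simp only [Perm.coe_inv, symm_apply_apply]

variable [Finite α] [DecidableEq α]

theorem numCycles_swap_mul_le (f : Perm α) (x y : α) :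
    numCycles (swap x y * f) ≤ numCycles f + 1 := by
  set g := swap x y * f
  have hle : cycleSetoid f ≤ (cycleSetoid g).mergeClasses x y := cycleSetoid_le fun z => by
    have hf : f z = swap x y (g z) := by simp [g]
    rw [hf]
    exact ((cycleSetoid g).mergeClasses x y).trans
      (Setoid.rel_swap_apply (Setoid.mergeClasses_rel _ x y) _)
      (Setoid.le_mergeClasses _ x y (Perm.sameCycle_apply_left.2 (.refl g z)))
  calc numCycles g ≤ Nat.card (Quotient ((cycleSetoid g).mergeClasses x y)) + 1 :=
        Setoid.card_quotient_le_card_quotient_mergeClasses_add_one _ x y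
    _ ≤ numCycles f + 1 := by gcongr; exact Setoid.card_quotient_le_of_le hle

theorem numCycles_lt_swap_mul {f : Perm α} {x y : α} (hxy : x ≠ y) (h : f.SameCycle x y) :
    numCycles f < numCycles (swap x y * f) := by
  refine Setoid.card_quotient_lt_of_le (cycleSetoid_le fun z => ?_) h
    fun h' => (Perm.sameCycle_swap_mul_iff hxy).1 h' h
  exact (Setoid.rel_swap_apply (r := cycleSetoid f) h (f z)).trans
    (Perm.sameCycle_apply_left.2 (.refl f z))

theorem numCycles_lt_mul_swap {f : Perm α} {x y : α} (hxy : x ≠ y) (h : f.SameCycle x y) :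
    numCycles f < numCycles (f * swap x y) := by
  rw [numCycles_mul_comm]
  exact numCycles_lt_swap_mul hxy h

end CycleCounts

section Components

variable {α : Type*}

def componentSetoid (a0 a1 : Perm α) : Setoid α :=
  MulAction.orbitRel (Subgroup.closure {a0, a1}) α

theorem componentSetoid_rel_of_mem {a0 a1 g : Perm α} (hg : g ∈ Subgroup.closure {a0, a1})
    (z : α) : componentSetoid a0 a1 (g z) z :=
  ⟨⟨g, hg⟩, rfl⟩

theorem componentSetoid_le_iff {a0 a1 : Perm α} {r : Setoid α} :
    componentSetoid a0 a1 ≤ r ↔ (∀ z, r (a0 z) z) ∧ (∀ z, r (a1 z) z) := by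
  refine ⟨fun h => ⟨fun z => h (componentSetoid_rel_of_mem (Subgroup.subset_closure (by simp)) z),
    fun z => h (componentSetoid_rel_of_mem (Subgroup.subset_closure (by simp)) z)⟩,
    fun ⟨h0, h1⟩ => MulAction.orbitRel_closure_le ?_⟩
  rintro g (rfl | rfl)
  exacts [h0, h1]

theorem cycleSetoid_facePerm_le (a0 a1 : Perm α) :
    cycleSetoid (facePerm a0 a1) ≤ componentSetoid a0 a1 :=
  cycleSetoid_le <| componentSetoid_rel_of_mem <| show a1⁻¹ * a0⁻¹ ∈ _ from
    mul_mem (inv_mem (Subgroup.subset_closure (by simp)))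
      (inv_mem (Subgroup.subset_closure (by simp)))

variable [DecidableEq α]

theorem componentSetoid_le_of_mul_swap {a0 a1 : Perm α} {x y : α} {r : Setoid α}
    (h : componentSetoid a0 (a1 * swap x y) ≤ r) (hxy : r x y) : componentSetoid a0 a1 ≤ r := by
  obtain ⟨h0, h1⟩ := componentSetoid_le_iff.1 h
  refine componentSetoid_le_iff.2 ⟨h0, fun z => ?_⟩
  have ha1 : a1 z = (a1 * swap x y) (swap x y z) := by simp
  rw [ha1]
  exact r.trans (h1 _) (Setoid.rel_swap_apply hxy z)

variable [Finite α]

theorem numComponents_mul_swap_le_succ (a0 a1 : Perm α) (x y : α) :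
    numComponents a0 (a1 * swap x y) ≤ numComponents a0 a1 + 1 := by
  set r := componentSetoid a0 (a1 * swap x y)
  calc numComponents a0 (a1 * swap x y) ≤ Nat.card (Quotient (r.mergeClasses x y)) + 1 :=
        Setoid.card_quotient_le_card_quotient_mergeClasses_add_one r x y
    _ ≤ numComponents a0 a1 + 1 := by
        gcongr
        exact Setoid.card_quotient_le_of_le <| componentSetoid_le_of_mul_swap
          (Setoid.le_mergeClasses r x y) (Setoid.mergeClasses_rel r x y)

theorem numComponents_mul_swap_le {a0 a1 : Perm α} {x y : α}
    (h : componentSetoid a0 (a1 * swap x y) x y) :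
    numComponents a0 (a1 * swap x y) ≤ numComponents a0 a1 :=
  Setoid.card_quotient_le_of_le (componentSetoid_le_of_mul_swap le_rfl h)

end Components

section EulerChar

variable {α : Type*} [Fintype α]

theorem eulerChar_one_le_two_mul_numComponents (a0 : Perm α) :
    eulerChar α a0 1 ≤ 2 * (numComponents a0 1 : ℤ) := by
  have ha0 : ∀ z, a0.SameCycle (a0 z) z := fun z => Perm.sameCycle_apply_left.2 (.refl a0 z)
  have hv := numCycles_le_card (1 : Perm α)
  have he : numCycles a0 ≤ numComponents a0 1 :=
    Setoid.card_quotient_le_of_le (componentSetoid_le_iff.2 ⟨ha0, fun z => .refl _ z⟩)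
  have hf : numCycles (facePerm a0 1) ≤ numComponents a0 1 :=
    Setoid.card_quotient_le_of_le (componentSetoid_le_iff.2
      ⟨fun z => show (a0⁻¹ * 1⁻¹ : Perm α).SameCycle (a0 z) z by simpa using ha0 z,
        fun z => .refl _ z⟩)
  rw [Nat.card_eq_fintype_card] at hv
  unfold eulerChar
  omega

theorem eulerChar_le_two_mul_numComponents_of_mul_swap [DecidableEq α] {a0 a1 : Perm α}
    {x y : α} (hxy : x ≠ y) (hsc : a1.SameCycle x y)
    (ih : eulerChar α a0 (a1 * swap x y) ≤ 2 * (numComponents a0 (a1 * swap x y) : ℤ)) :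
    eulerChar α a0 a1 ≤ 2 * (numComponents a0 a1 : ℤ) := by
  have hv := numCycles_lt_mul_swap hxy hsc
  have hφ : facePerm a0 (a1 * swap x y) = swap x y * facePerm a0 a1 := by
    change (a1 * swap x y)⁻¹ * a0⁻¹ = swap x y * (a1⁻¹ * a0⁻¹)
    rw [mul_inv_rev, swap_inv, mul_assoc]
  unfold eulerChar at ih ⊢
  rw [hφ] at ih
  by_cases hf : (facePerm a0 a1).SameCycle x y
  · have := numCycles_lt_swap_mul hxy hf
    have := numComponents_mul_swap_le_succ a0 a1 x y
    omega
  · have hf' := numCycles_swap_mul_le (swap x y * facePerm a0 a1) x y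
    rw [swap_mul_self_mul] at hf'
    have := numComponents_mul_swap_le <|
      cycleSetoid_facePerm_le a0 (a1 * swap x y) (hφ ▸ (Perm.sameCycle_swap_mul_iff hxy).2 hf)
    omega

end EulerChar

/-- For any hypermap, 2·c ≥ χ. -/
theorem two_nc_ge_ec {D : Type*} [Fintype D] (a0 a1 : Perm D) :
    eulerChar D a0 a1 ≤ 2 * (numComponents a0 a1 : ℤ) := by
  classical
  induction hn : Fintype.card D - numCycles a1 using Nat.strong_induction_on generalizing a1 with
  | _ n ih =>
  by_cases ha1 : a1 = 1
  · subst ha1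
    exact eulerChar_one_le_two_mul_numComponents a0
  obtain ⟨x, hx⟩ : ∃ x, a1 x ≠ x := not_forall.1 fun h => ha1 (Equiv.ext h)
  have hsc : a1.SameCycle x (a1 x) := Perm.sameCycle_apply_right.2 (.refl a1 x)
  refine eulerChar_le_two_mul_numComponents_of_mul_swap hx.symm hsc (ih _ ?_ _ rfl)
  have hlt := numCycles_lt_mul_swap hx.symm hsc
  have hle := numCycles_le_card (a1 * swap x (a1 x))
  rw [Nat.card_eq_fintype_card] at hle
  omega
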